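/- arXiv:2012.00812 — 4 statements merged into one kernel-verified Lean document; each statement's English description precedes it below -/
import Mathlib

section
/- The Shapley value of the sum game is stable (belongs to the core): for every coalition S ⊆ N, Σ_{i ∈ S} φ_i(N, v_Σ) ≥ v_Σ(S) = Σ_{T ⊆ S} f(T), and Σ_{i ∈ N} φ_i(N, v_Σ) = v_Σ(N). -/
/-!
Exchanging the order of summation, the coalition `S` receives `|S ∩ T| · f(T)/|T|` from each
`T`. This is exactly `f(T)` when `T ⊆ S` and nonnegative otherwise, while `v_Σ(S)` only collects
the `f(T)` with `T ⊆ S`; for `S = N` every `T` is a subset (the empty one contributing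
`f(∅) = 0` on both sides).
-/

/-- The Shapley value of the sum game built from `f`: `φ_i = ∑_{S ∋ i} f(S)/|S|`. -/
noncomputable def shapleySum {α : Type*} [DecidableEq α] [Fintype α]
    (f : Finset α → ℝ) (i : α) : ℝ :=
  ∑ S ∈ (Finset.univ : Finset α).powerset.filter (fun S => i ∈ S), f S / S.card

open Finset

theorem sum_shapleySum_eq {α : Type*} [DecidableEq α] [Fintype α]
    (f : Finset α → ℝ) (S : Finset α) :
    ∑ i ∈ S, shapleySum f i = ∑ T : Finset α, (#(S ∩ T) : ℝ) * (f T / #T) := by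
  simp only [shapleySum, powerset_univ, sum_filter]
  rw [sum_comm]
  refine sum_congr rfl fun T _ => ?_
  rw [← sum_filter, filter_mem_eq_inter, sum_const, nsmul_eq_mul]

theorem card_mul_div_card_eq {α : Type*} (f : Finset α → ℝ) (h0 : f ∅ = 0) (T : Finset α) :
    (#T : ℝ) * (f T / #T) = f T := by
  rcases T.eq_empty_or_nonempty with rfl | hT
  · simp [h0]
  · exact mul_div_cancel₀ _ (Nat.cast_ne_zero.2 hT.card_pos.ne')

/-- The Shapley value of the sum game is stable: it is efficient and for every
coalition `S` the payoff of `S` is at least `v_Σ(S) = ∑_{T ⊆ S} f(T)`. -/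
theorem shapleySum_stable {α : Type*} [DecidableEq α] [Fintype α]
    (f : Finset α → ℝ) (hf : ∀ T, 0 ≤ f T) (h0 : f ∅ = 0) :
    (∀ S : Finset α, ∑ T ∈ S.powerset, f T ≤ ∑ i ∈ S, shapleySum f i) ∧
      (∑ i : α, shapleySum f i =
        ∑ T ∈ (Finset.univ : Finset α).powerset, f T) := by
  refine ⟨fun S => ?_, ?_⟩
  · rw [sum_shapleySum_eq]
    calc ∑ T ∈ S.powerset, f T
        = ∑ T ∈ S.powerset, (#(S ∩ T) : ℝ) * (f T / #T) := by
          refine sum_congr rfl fun T hT => ?_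
          rw [inter_eq_right.2 (mem_powerset.1 hT), card_mul_div_card_eq f h0]
      _ ≤ ∑ T : Finset α, (#(S ∩ T) : ℝ) * (f T / #T) :=
          sum_le_sum_of_subset_of_nonneg (subset_univ _) fun T _ _ => by
            have := hf T
            positivity
  · rw [sum_shapleySum_eq, powerset_univ]
    simp only [univ_inter, card_mul_div_card_eq f h0]
end

section
/- The Shapley value of the sum game satisfies the no-subsidizing property: if S* ⊆ N is an independent set of channels, i.e., f(S ∪ T) = 0 for all S ⊆ S* and all nonempty T ⊆ N∖S*, then Σ_{i ∈ S*} φ_i(N, v_Σ) = Σ_{T ⊆ S*} f(T). -/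
/-!
Exchanging the two sums, coalition `S` contributes `f S * |S ∩ S*| / |S|` to `∑_{i ∈ S*} φ_i`.
This is `f S` when `∅ ≠ S ⊆ S*`, and `f S = 0` when `S ⊄ S*`, since `S` is then
`(S ∩ S*) ∪ (S \ S*)` with `S \ S*` nonempty.
-/

open Finset

section
variable {α : Type*} [DecidableEq α] [Fintype α]

theorem shapleySum_eq_sum_ite (f : Finset α → ℝ) (i : α) :
    shapleySum f i = ∑ S, if i ∈ S then f S / #S else 0 := by
  rw [shapleySum, sum_filter, powerset_univ]

theorem sum_shapleySum (f : Finset α → ℝ) (A : Finset α) :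
    ∑ i ∈ A, shapleySum f i = ∑ S, #(A ∩ S) * (f S / #S) := by
  simp_rw [shapleySum_eq_sum_ite]
  rw [sum_comm]
  refine sum_congr rfl fun S _ => ?_
  rw [sum_ite_mem, sum_const, nsmul_eq_mul]

theorem sum_shapleySum_eq_sum_powerset (f : Finset α → ℝ) (h0 : f ∅ = 0)
    (A : Finset α) (hA : ∀ S, ¬S ⊆ A → f S = 0) :
    ∑ i ∈ A, shapleySum f i = ∑ S ∈ A.powerset, f S := by
  rw [sum_shapleySum, ← sum_subset (subset_univ A.powerset)]
  · refine sum_congr rfl fun S hS => ?_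
    rcases S.eq_empty_or_nonempty with rfl | hne
    · simp [h0]
    · rw [inter_eq_right.mpr (mem_powerset.mp hS)]
      field_simp
  · intro S _ hS
    rw [hA S (mt mem_powerset.mpr hS), zero_div, mul_zero]

omit [Fintype α] in
theorem eq_zero_of_not_subset_of_independent (f : Finset α → ℝ) (A B : Finset α)
    (hind : ∀ S ⊆ A, ∀ T ⊆ B \ A, T ≠ ∅ → f (S ∪ T) = 0) {S : Finset α} (hSB : S ⊆ B)
    (hSA : ¬S ⊆ A) : f S = 0 := by
  have hne : S \ A ≠ ∅ := by rwa [Ne, sdiff_eq_empty_iff_subset]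
  simpa only [← sup_eq_union, ← inf_eq_inter, sup_inf_sdiff] using
    hind (S ∩ A) inter_subset_right (S \ A) (sdiff_subset_sdiff hSB le_rfl) hne
end

theorem shapleySum_noSubsidizing_general {α : Type*} [DecidableEq α] [Fintype α]
    (f : Finset α → ℝ) (h0 : f ∅ = 0)
    (Sstar : Finset α)
    (hind : ∀ S ⊆ Sstar, ∀ T ⊆ Finset.univ \ Sstar, T ≠ ∅ → f (S ∪ T) = 0) :
    ∑ i ∈ Sstar, shapleySum f i = ∑ T ∈ Sstar.powerset, f T :=
  sum_shapleySum_eq_sum_powerset f h0 Sstar fun _ =>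
    eq_zero_of_not_subset_of_independent f Sstar univ hind (subset_univ _)

/-- No-subsidizing property: if `S*` is an independent set of channels, i.e.
`f(S ∪ T) = 0` for all `S ⊆ S*` and all nonempty `T ⊆ N∖S*`, then
`∑_{i ∈ S*} φ_i = ∑_{T ⊆ S*} f(T)`. -/
theorem shapleySum_noSubsidizing {α : Type*} [DecidableEq α] [Fintype α]
    (f : Finset α → ℝ) (hf : ∀ T, 0 ≤ f T) (h0 : f ∅ = 0)
    (Sstar : Finset α)
    (hind : ∀ S ⊆ Sstar, ∀ T ⊆ Finset.univ \ Sstar, T ≠ ∅ → f (S ∪ T) = 0) :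
    ∑ i ∈ Sstar, shapleySum f i = ∑ T ∈ Sstar.powerset, f T :=
  shapleySum_noSubsidizing_general f h0 Sstar hind
end

section
/- A bankruptcy problem (E, c) with claimant set N arises from an attribution problem if and only if Σ_{i∈N} c_i ≥ E ≥ max_{i∈N} c_i; that is, this condition is necessary and sufficient for the existence of a nonnegative set function f : 2^N → ℝ≥0 with f(∅)=0 such that E = Σ_{∅≠S⊆N} f(S) and c_i = Σ_{S⊆N, i∈S} f(S) for all i ∈ N. -/
/-!
Necessity is double counting: `∑ᵢ cᵢ = ∑_S |S| f(S) ≥ ∑_{S ≠ ∅} f(S) = E`, and each `cᵢ` is a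
partial sum of `E`. Sufficiency is by induction on the claimants. To add a claimant `a` to `s`,
solve the problem on `s` with estate `E' = min (∑_{i ∈ s} cᵢ) E`, then move a fraction `t` of the
mass of every coalition `S` to `S ∪ {a}` and put the rest `E - E'` of the estate on `{a}`. This
gives `a` the claim `t E' + (E - E')`, and `t ∈ [0, 1]` can be chosen to make it `c_a` because
`E - c_a ≤ E'` and `c_a ≤ E`.
-/

open Finset

theorem exists_mem_Icc_mul_eq_of_le {K : Type*} [Field K] [LinearOrder K] [IsStrictOrderedRing K]
    {x y : K} (hx : 0 ≤ x) (hxy : x ≤ y) : ∃ t ∈ Set.Icc (0 : K) 1, x = t * y := by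
  rcases hx.eq_or_lt with rfl | hx
  · exact ⟨0, by simp, by simp⟩
  · have hy := hx.trans_le hxy
    exact ⟨x / y, ⟨div_nonneg hx.le hy.le, div_le_one_of_le₀ hxy hy.le⟩, by field_simp⟩

section

variable {α : Type*} [DecidableEq α]

structure IsAttribution (N : Finset α) (E : ℝ) (c : α → ℝ) (f : Finset α → ℝ) : Prop where
  nonneg : ∀ S, 0 ≤ f S
  map_empty : f ∅ = 0
  estate_eq : E = ∑ S ∈ N.powerset, f S
  claim_eq : ∀ i ∈ N, c i = ∑ S ∈ N.powerset, if i ∈ S then f S else 0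

def insertClaimant (f : Finset α → ℝ) (a : α) (t w : ℝ) (S : Finset α) : ℝ :=
  if a ∈ S then t * f (S.erase a) + (if S.erase a = ∅ then w else 0) else (1 - t) * f S

namespace IsAttribution

variable {N : Finset α} {E : ℝ} {c : α → ℝ} {f : Finset α → ℝ}

theorem sum_claims_eq (h : IsAttribution N E c f) :
    ∑ i ∈ N, c i = ∑ S ∈ N.powerset, (#S : ℝ) * f S := by
  rw [sum_congr rfl h.claim_eq, sum_comm]
  refine sum_congr rfl fun S hS => ?_
  rw [sum_ite_mem, inter_eq_right.mpr (mem_powerset.mp hS), sum_const, nsmul_eq_mul]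

theorem le_sum_claims (h : IsAttribution N E c f) : E ≤ ∑ i ∈ N, c i := by
  rw [h.sum_claims_eq, h.estate_eq]
  refine sum_le_sum fun S _ => ?_
  rcases S.eq_empty_or_nonempty with rfl | hS
  · simp [h.map_empty]
  · exact le_mul_of_one_le_left (h.nonneg S) (by exact_mod_cast hS.card_pos)

theorem claim_le (h : IsAttribution N E c f) {i : α} (hi : i ∈ N) : c i ≤ E := by
  rw [h.claim_eq i hi, h.estate_eq]
  exact sum_le_sum fun S _ => by split_ifs <;> simp [h.nonneg S]

theorem insert_claimant {s : Finset α} {a : α} {t w : ℝ} (h : IsAttribution s E c f) (ha : a ∉ s)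
    (ht : t ∈ Set.Icc 0 1) (hw : 0 ≤ w) (hca : c a = t * E + w) :
    IsAttribution (insert a s) (E + w) c (insertClaimant f a t w) := by
  have hins : ∀ T ∈ s.powerset, insertClaimant f a t w (insert a T) =
      t * f T + if T = ∅ then w else 0 := fun T hT => by
    have haT : a ∉ T := fun haT => ha (mem_powerset.mp hT haT)
    simp [insertClaimant, erase_insert haT]
  have hout : ∀ T ∈ s.powerset, insertClaimant f a t w T = (1 - t) * f T := fun T hT => by
    have haT : a ∉ T := fun haT => ha (mem_powerset.mp hT haT)
    simp [insertClaimant, haT]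
  refine ⟨fun S => ?_, by simp [insertClaimant, h.map_empty], ?_, ?_⟩
  · have := h.nonneg S
    have := h.nonneg (S.erase a)
    unfold insertClaimant
    split_ifs <;> nlinarith [ht.1, ht.2]
  · rw [sum_powerset_insert ha, sum_congr rfl hout, sum_congr rfl hins, sum_add_distrib,
      sum_ite_eq' _ _ (fun _ => w), if_pos (empty_mem_powerset s), ← mul_sum, ← mul_sum,
      ← h.estate_eq]
    ring
  · intro i hi
    rw [sum_powerset_insert ha]
    rcases mem_insert.mp hi with rfl | hi
    · have hzero : ∀ T ∈ s.powerset, (if i ∈ T then insertClaimant f i t w T else 0) = 0 :=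
        fun T hT => if_neg fun hiT => ha (mem_powerset.mp hT hiT)
      have hwith : ∀ T ∈ s.powerset,
          (if i ∈ insert i T then insertClaimant f i t w (insert i T) else 0) =
            t * f T + if T = ∅ then w else 0 := fun T hT => by
        rw [if_pos (mem_insert_self i T), hins T hT]
      rw [sum_eq_zero hzero, zero_add, sum_congr rfl hwith, sum_add_distrib, sum_ite_eq' _ _ (fun _ => w), if_pos (empty_mem_powerset s),
        ← mul_sum, ← h.estate_eq, hca]
    · have hia : i ≠ a := fun hia => ha (hia ▸ hi)
      have hfirst : ∀ T ∈ s.powerset, (if i ∈ T then insertClaimant f a t w T else 0) =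
          (1 - t) * if i ∈ T then f T else 0 := fun T hT => by
        rw [hout T hT, mul_ite, mul_zero]
      have hsecond : ∀ T ∈ s.powerset,
          (if i ∈ insert a T then insertClaimant f a t w (insert a T) else 0) =
            t * if i ∈ T then f T else 0 := fun T hT => by
        simp only [hins T hT, mem_insert, hia, false_or]
        split_ifs <;> simp_all
      rw [sum_congr rfl hfirst, sum_congr rfl hsecond, ← mul_sum, ← mul_sum, ← h.claim_eq i hi]
      ring

end IsAttribution

theorem exists_isAttribution (N : Finset α) {E : ℝ} {c : α → ℝ} (hE : 0 ≤ E)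
    (hc : ∀ i ∈ N, 0 ≤ c i) (hsum : E ≤ ∑ i ∈ N, c i) (hmax : ∀ i ∈ N, c i ≤ E) :
    ∃ f, IsAttribution N E c f := by
  induction N using Finset.induction_on generalizing E with
  | empty =>
    obtain rfl : E = 0 := le_antisymm (by simpa using hsum) hE
    exact ⟨fun _ => 0, fun _ => le_rfl, rfl, by simp, by simp⟩
  | insert a s ha ih =>
    rw [sum_insert ha] at hsum
    set E' := min (∑ i ∈ s, c i) E
    obtain ⟨f, hf⟩ := ih (le_min (sum_nonneg fun i hi => hc i (mem_insert_of_mem hi)) hE)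
      (fun i hi => hc i (mem_insert_of_mem hi)) (min_le_left _ _)
      (fun i hi => le_min (single_le_sum (fun j hj => hc j (mem_insert_of_mem hj)) hi)
        (hmax i (mem_insert_of_mem hi)))
    have hgap : E - c a ≤ E' := le_min (by linarith) (by linarith [hc a (mem_insert_self a s)])
    obtain ⟨t, ht, hct⟩ := exists_mem_Icc_mul_eq_of_le (x := c a - (E - E')) (y := E')
      (by linarith) (by linarith [hmax a (mem_insert_self a s)])
    have hf' := hf.insert_claimant (w := E - E') ha ht (sub_nonneg.mpr (min_le_right _ _))
      (by linarith)
    rw [add_sub_cancel] at hf'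
    exact ⟨_, hf'⟩

end

/-- A bankruptcy problem `(E, c)` with nonnegative claims arises from an
attribution problem iff `∑ c_i ≥ E ≥ c_i` for every claimant `i`: this is
necessary and sufficient for a nonnegative set function `f` (with `f ∅ = 0`) with
`E = ∑_{∅≠S⊆N} f(S)` and `c_i = ∑_{S ∋ i} f(S)` to exist. -/
theorem attribution_bankruptcy_characterization {α : Type*} [DecidableEq α] [Fintype α]
    (E : ℝ) (c : α → ℝ) (hE : 0 < E) (hc : ∀ i, 0 ≤ c i) :
    (E ≤ ∑ i : α, c i ∧ ∀ i : α, c i ≤ E) ↔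
      ∃ f : Finset α → ℝ, (∀ S, 0 ≤ f S) ∧ f ∅ = 0 ∧
        E = ∑ S ∈ (Finset.univ : Finset α).powerset.erase ∅, f S ∧
        ∀ i : α, c i =
          ∑ S ∈ (Finset.univ : Finset α).powerset.filter (fun S => i ∈ S), f S := by
  constructor
  · rintro ⟨hsum, hmax⟩
    obtain ⟨f, hf⟩ := exists_isAttribution univ hE.le (fun i _ => hc i) hsum (fun i _ => hmax i)
    exact ⟨f, hf.nonneg, hf.map_empty, by rw [sum_erase _ hf.map_empty, hf.estate_eq],
      fun i => by rw [sum_filter, hf.claim_eq i (mem_univ i)]⟩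
  · rintro ⟨f, hf_nonneg, hf_empty, hf_estate, hf_claim⟩
    have hf : IsAttribution univ E c f :=
      ⟨hf_nonneg, hf_empty, by rwa [sum_erase _ hf_empty] at hf_estate,
        fun i _ => by rw [hf_claim i, sum_filter]⟩
    exact ⟨hf.le_sum_claims, fun i => hf.claim_le (mem_univ i)⟩
end

section
/- The CEL rule satisfies the irrelevant players property: if CEL_k(N,E,c) = 0 for some k ∈ N, then (E, c_{−k}) is still a bankruptcy problem (Σ_{i≠k} c_i ≥ E), and CEL_i(N∖{k}, E, c_{−k}) = CEL_i(N, E, c) for all i ≠ k. -/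
open Finset

/-! Removing a claimant whose CEL share is zero leaves the total `E` distributed among the others
at the old loss level `λ`. The total `∑ max 0 (c i - λ)` is antitone in `λ`, with every summand
antitone, so two loss levels giving the same total over the remaining claimants give every one
of them the same share. -/

theorem max_zero_sub_eq_of_sum_eq {ι : Type*} (s : Finset ι) (c : ι → ℝ) {lam lam' : ℝ}
    (h : ∑ i ∈ s, max 0 (c i - lam) = ∑ i ∈ s, max 0 (c i - lam')) :
    ∀ i ∈ s, max 0 (c i - lam) = max 0 (c i - lam') := by
  wlog hle : lam' ≤ lam generalizing lam lam'
  · exact fun i hi => (this h.symm (le_of_not_ge hle) i hi).symm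
  have hmono : ∀ i ∈ s, max 0 (c i - lam) ≤ max 0 (c i - lam') := fun i _ =>
    max_le_max le_rfl (by linarith)
  exact (sum_eq_sum_iff_of_le hmono).mp h

theorem CEL_irrelevant_players_general {α : Type*} [DecidableEq α] [Fintype α]
    (E : ℝ) (c : α → ℝ) (hc : ∀ i, 0 ≤ c i)
    (lam : ℝ) (hlam : 0 ≤ lam)
    (hCEL : ∑ i : α, max 0 (c i - lam) = E)
    (k : α) (hk : max 0 (c k - lam) = 0)
    (lam' : ℝ)
    (hCEL' : ∑ i ∈ Finset.univ.erase k, max 0 (c i - lam') = E) :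
    (E ≤ ∑ i ∈ Finset.univ.erase k, c i) ∧
      ∀ i ∈ Finset.univ.erase k, max 0 (c i - lam') = max 0 (c i - lam) := by
  have hreduced : ∑ i ∈ univ.erase k, max 0 (c i - lam) = E := by
    rw [sum_erase (f := fun i => max 0 (c i - lam)) univ hk, hCEL]
  refine ⟨?_, max_zero_sub_eq_of_sum_eq _ c (hCEL'.trans hreduced.symm)⟩
  calc E = ∑ i ∈ univ.erase k, max 0 (c i - lam) := hreduced.symm
    _ ≤ ∑ i ∈ univ.erase k, c i := sum_le_sum fun i _ => max_le (hc i) (by linarith)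

/-- Irrelevant players property of the CEL rule: if `CEL_k = max{0, c_k − λ} = 0`
for some claimant `k`, then the reduced problem `(E, c_{−k})` is still a
bankruptcy problem, and the CEL shares of the remaining claimants are unchanged. -/
theorem CEL_irrelevant_players {α : Type*} [DecidableEq α] [Fintype α]
    (E : ℝ) (c : α → ℝ) (hE : 0 < E) (hc : ∀ i, 0 ≤ c i)
    (hsum : E ≤ ∑ i : α, c i)
    (lam : ℝ) (hlam : 0 ≤ lam)
    (hCEL : ∑ i : α, max 0 (c i - lam) = E)
    (k : α) (hk : max 0 (c k - lam) = 0)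
    (lam' : ℝ) (hlam' : 0 ≤ lam')
    (hCEL' : ∑ i ∈ Finset.univ.erase k, max 0 (c i - lam') = E) :
    (E ≤ ∑ i ∈ Finset.univ.erase k, c i) ∧
      ∀ i ∈ Finset.univ.erase k, max 0 (c i - lam') = max 0 (c i - lam) :=
  CEL_irrelevant_players_general E c hc lam hlam hCEL k hk lam' hCEL'
end
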